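/- arXiv:1104.0920 — 2 statements merged into one kernel-verified Lean document; each statement's English description precedes it below -/
import Mathlib

section
/- For every n ≥ 5 and every d with 3 ≤ d ≤ n−1, H(C_{n,d,⌊d/2⌋}) < H(C_{n,d−1,⌊(d−1)/2⌋}). Consequently H(P_n) = H(C_{n,n−1,⌊(n−1)/2⌋}) < … < H(C_{n,3,1}) < H(C_{n,2,1}) = H(S_n). -/
open Finset SimpleGraph

open Classical in
/-- The Harary index: half the sum, over ordered pairs of distinct vertices, of the
reciprocal of the shortest-path distance (so each unordered pair is counted once). -/
noncomputable def harary {V : Type*} [Fintype V] (G : SimpleGraph V) : ℝ :=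
  (∑ u : V, ∑ v : V, if u = v then 0 else (1 : ℝ) / (G.dist u v)) / 2

/-- The path graph `P_n` on `n` vertices. -/
def pathG (n : ℕ) : SimpleGraph (Fin n) :=
  SimpleGraph.fromRel (fun x y => (y : ℕ) = (x : ℕ) + 1)

/-- The star graph `S_n` on `n` vertices, with center `0`. -/
def starG (n : ℕ) : SimpleGraph (Fin n) :=
  SimpleGraph.fromRel (fun x y => (x : ℕ) = 0 ∧ (y : ℕ) ≠ 0)

/-- The spider (starlike tree) `S(L 0, …, L (k-1))`: a center `none` together with `k`
disjoint paths, the `i`-th having `L i` vertices, the center joined to vertex `0` of each leg. -/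
def spider {k : ℕ} (L : Fin k → ℕ) : SimpleGraph (Option (Σ i : Fin k, Fin (L i))) :=
  SimpleGraph.fromRel (fun x y =>
    (∃ (i : Fin k) (j : Fin (L i)), x = none ∧ y = some ⟨i, j⟩ ∧ (j : ℕ) = 0) ∨
    (∃ (i : Fin k) (j j' : Fin (L i)),
      x = some ⟨i, j⟩ ∧ y = some ⟨i, j'⟩ ∧ (j' : ℕ) = (j : ℕ) + 1))

/-- Leg lengths of the balanced starlike tree `BS n k`: the legs sum to `n - 1` and
pairwise differ by at most `1`. -/
def balancedLegs (n k : ℕ) : Fin k → ℕ :=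
  fun i => (n - 1) / k + if (i : ℕ) < (n - 1) % k then 1 else 0

/-- The balanced starlike tree `BS_{n,k}` on `n` vertices with `k` legs of almost equal length. -/
def BS (n k : ℕ) : SimpleGraph (Option (Σ i : Fin k, Fin (balancedLegs n k i))) :=
  spider (balancedLegs n k)

/-- Leg lengths of the broom `B_{n,k}`: one leg with `n - k` vertices, `k - 1` legs with one. -/
def broomLegs (n k : ℕ) : Fin k → ℕ := fun i => if (i : ℕ) = 0 then n - k else 1

/-- The broom `B_{n,k} = S(n-k, 1, …, 1)`. -/
def broom (n k : ℕ) : SimpleGraph (Option (Σ i : Fin k, Fin (broomLegs n k i))) :=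
  spider (broomLegs n k)

/-- Leg lengths of the spur `A_{n,m}`: `n - m - 1` legs with two vertices, the rest with one. -/
def spurLegs (n m : ℕ) : Fin m → ℕ := fun i => if (i : ℕ) < n - m - 1 then 2 else 1

/-- The spur `A_{n,m}`: the star `S_{m+1}` with a pendent edge attached to `n - m - 1`
of its pendent vertices. -/
def spur (n m : ℕ) : SimpleGraph (Option (Σ i : Fin m, Fin (spurLegs n m i))) :=
  spider (spurLegs n m)

/-- The caterpillar `C_{n,d,i}`: a path `v_0 v_1 … v_d` with `n - d - 1` pendent
vertices attached at `v_i`. -/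
def caterpillar (n d i : ℕ) : SimpleGraph (Fin (d + 1) ⊕ Fin (n - d - 1)) :=
  SimpleGraph.fromRel (fun x y =>
    (∃ a b : Fin (d + 1), x = Sum.inl a ∧ y = Sum.inl b ∧ (b : ℕ) = (a : ℕ) + 1) ∨
    (∃ (a : Fin (d + 1)) (p : Fin (n - d - 1)), (a : ℕ) = i ∧ x = Sum.inl a ∧ y = Sum.inr p))

/-- Degree of a vertex. -/
noncomputable def deg {V : Type*} [Fintype V] (G : SimpleGraph V) (v : V) : ℕ :=
  (G.neighborSet v).ncard

/-- Eccentricity of a vertex: the maximum distance to another vertex. -/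
noncomputable def ecc {V : Type*} [Fintype V] (G : SimpleGraph V) (v : V) : ℕ :=
  Finset.univ.sup fun u => G.dist v u

/-- Diameter of a graph: the maximum eccentricity. -/
noncomputable def graphDiam {V : Type*} [Fintype V] (G : SimpleGraph V) : ℕ :=
  Finset.univ.sup fun v => ecc G v

/-- Radius of a graph: the minimum eccentricity. -/
noncomputable def graphRadius {V : Type*} [Fintype V] (G : SimpleGraph V) : ℕ :=
  sInf (Set.range fun v => ecc G v)

/-- Matching number: the maximum cardinality of a set of pairwise non-incident edges. -/
noncomputable def matchingNumber {V : Type*} [Fintype V] (G : SimpleGraph V) : ℕ :=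
  sSup {k | ∃ M : Finset (Sym2 V), M.card = k ∧ (∀ e ∈ M, e ∈ G.edgeSet) ∧
    ∀ e ∈ M, ∀ f ∈ M, e ≠ f → ∀ v : V, ¬(v ∈ e ∧ v ∈ f)}

/-- Independence number: the maximum cardinality of a set of pairwise non-adjacent vertices. -/
noncomputable def indepNum {V : Type*} [Fintype V] (G : SimpleGraph V) : ℕ :=
  sSup {k | ∃ s : Finset V, s.card = k ∧ ∀ u ∈ s, ∀ v ∈ s, u ≠ v → ¬ G.Adj u v}

/-!
Distances in `C_{n,d,i}` are explicit: `|a - b|` between spine vertices `v_a, v_b`, `|a - i| + 1`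
from `v_a` to a pendant vertex and `2` between two pendant vertices; the lower bounds come from
functions on the vertices that change by at most one along each edge. With `m = n - d - 1` pendant
vertices this gives `H(C_{n,d,i}) = H(P_{d+1}) + m S(d,i) + m(m-1)/4`, where
`S(d,i) = ∑_{a ≤ d} 1/(|a - i| + 1)`.

Passing from `C_{n,d-1,⌊(d-1)/2⌋}` to `C_{n,d,⌊d/2⌋}` turns one pendant vertex into the new end of
the spine. That vertex now sees the spine from its end rather than from its middle, and
`S(d-1,d-1) < S(d-1,⌊(d-1)/2⌋)`; each of the other `m` pendant vertices loses a partner at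
distance `2` and gains one at distance at least `2`. At the two ends of the chain, `C_{n,n-1,i}` has
no pendant vertices, and in `S_n` all distances are at most `2` and there are `n - 1` edges, which
gives `H(S_n) = (n-1)(n+2)/4`, the value of the formula for `C_{n,2,1}`.
-/

namespace SimpleGraph

variable {V W : Type*} {G : SimpleGraph V} {u v : V}

theorem Walk.natDist_le_length {f : V → ℕ} (hf : ∀ x y, G.Adj x y → Nat.dist (f x) (f y) ≤ 1)
    (w : G.Walk u v) : Nat.dist (f u) (f v) ≤ w.length := by
  induction w with
  | nil => simp [Nat.dist_self]
  | @cons x y z h w ih =>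
    rw [length_cons]
    exact (Nat.dist.triangle_inequality _ (f y) _).trans (by linarith [hf x y h])

theorem Reachable.natDist_le_dist {f : V → ℕ}
    (hf : ∀ x y, G.Adj x y → Nat.dist (f x) (f y) ≤ 1) (h : G.Reachable u v) :
    Nat.dist (f u) (f v) ≤ G.dist u v := by
  obtain ⟨w, hw⟩ := h.exists_walk_length_eq_dist
  exact hw ▸ w.natDist_le_length hf

theorem Hom.dist_le {G' : SimpleGraph W} (φ : G →g G') (h : G.Reachable u v) :
    G'.dist (φ u) (φ v) ≤ G.dist u v := by
  obtain ⟨w, hw⟩ := h.exists_walk_length_eq_dist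
  exact hw ▸ w.length_map φ ▸ SimpleGraph.dist_le (w.map φ)

theorem dist_eq_two_of_adj_of_adj {w : V} (huv : u ≠ v) (hnadj : ¬ G.Adj u v) (hu : G.Adj u w)
    (hv : G.Adj w v) : G.dist u v = 2 := by
  rw [dist, edist_eq_two_iff.mpr ⟨huv, hnadj, w, G.mem_commonNeighbors.mpr ⟨hu, hv.symm⟩⟩]
  rfl

theorem pathGraph_exists_walk_length {n : ℕ} :
    ∀ (k : ℕ) (a b : Fin n), b.val = a.val + k → ∃ w : (pathGraph n).Walk a b, w.length = k
  | 0, a, b, h => ⟨Walk.nil.copy rfl (Fin.ext h.symm), by simp⟩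
  | k + 1, a, b, h => by
    obtain ⟨w, hw⟩ := pathGraph_exists_walk_length k ⟨a + 1, by omega⟩ b (by dsimp only; omega)
    exact ⟨.cons (pathGraph_adj.mpr (.inl rfl)) w, by simp [hw]⟩

theorem pathGraph_dist {n : ℕ} (a b : Fin n) : (pathGraph n).dist a b = Nat.dist a b := by
  refine le_antisymm ?_ ((pathGraph_preconnected n a b).natDist_le_dist (f := Fin.val) ?_)
  · wlog hab : a ≤ b generalizing a b
    · rw [dist_comm, Nat.dist_comm]
      exact this b a (le_of_not_ge hab)
    obtain ⟨w, hw⟩ := pathGraph_exists_walk_length (b - a) a b (by omega)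
    exact (dist_le w).trans_eq (hw.trans (Nat.dist_eq_sub_of_le hab).symm)
  · intro x y h
    rw [pathGraph_adj] at h
    unfold Nat.dist
    omega

end SimpleGraph

theorem harary_eq_sum {V : Type*} [Fintype V] (G : SimpleGraph V) :
    harary G = (∑ u, ∑ v, 1 / (G.dist u v : ℝ)) / 2 := by
  unfold harary
  congr 1
  refine Finset.sum_congr rfl fun u _ => Finset.sum_congr rfl fun v _ => ?_
  split_ifs with h <;> simp [h]

theorem harary_eq_of_dist_eq_two {V : Type*} [Fintype V] [DecidableEq V] (G : SimpleGraph V)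
    [DecidableRel G.Adj] (h : ∀ u v, u ≠ v → ¬ G.Adj u v → G.dist u v = 2) :
    harary G = (2 * #G.edgeFinset + Fintype.card V * (Fintype.card V - 1)) / 4 := by
  have hterm : ∀ u v, 1 / (G.dist u v : ℝ) =
      (if u = v then 0 else 1 / 2) + (if G.Adj u v then 1 / 2 else 0) := by
    intro u v
    by_cases huv : u = v
    · simp [huv]
    by_cases hadj : G.Adj u v
    · norm_num [huv, hadj, dist_eq_one_iff_adj.mpr hadj]
    · simp [huv, hadj, h u v huv hadj]
  have hdeg : ∀ u, ∑ v, (if G.Adj u v then (1 / 2 : ℝ) else 0) = G.degree u / 2 := by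
    intro u
    rw [Finset.sum_ite, Finset.sum_const_zero, add_zero, Finset.sum_const, nsmul_eq_mul,
      ← neighborFinset_eq_filter, card_neighborFinset_eq_degree]
    ring
  have hne : ∀ u : V, ∑ v, (if u = v then (0 : ℝ) else 1 / 2) = (Fintype.card V - 1) / 2 := by
    intro u
    rw [Finset.sum_ite, Finset.sum_const_zero, zero_add, Finset.filter_ne, Finset.sum_const,
      Finset.card_erase_of_mem (Finset.mem_univ u), Finset.card_univ, nsmul_eq_mul,
      Nat.cast_sub (Fintype.card_pos_iff.mpr ⟨u⟩)]
    ring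
  simp only [harary_eq_sum, hterm, Finset.sum_add_distrib, hdeg, hne, ← Finset.sum_div]
  rw [← Nat.cast_sum, sum_degrees_eq_twice_card_edges, Finset.sum_const, Finset.card_univ,
    nsmul_eq_mul]
  push_cast
  ring

theorem harary_starGraph {V : Type*} [Fintype V] [DecidableEq V] (r : V) :
    harary (starGraph r) = (Fintype.card V - 1) * (Fintype.card V + 2) / 4 := by
  rw [harary_eq_of_dist_eq_two]
  · rw [← (isTree_starGraph r).card_edgeFinset]
    push_cast
    ring
  · intro u v huv hnadj
    have hu : u ≠ r := by rintro rfl; exact hnadj (starGraph_center_adj huv)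
    have hv : v ≠ r := by rintro rfl; exact hnadj (starGraph_center_adj' huv.symm)
    exact dist_eq_two_of_adj_of_adj huv hnadj (starGraph_center_adj' hu.symm)
      (starGraph_center_adj hv.symm)

theorem pathG_eq_pathGraph (n : ℕ) : pathG n = pathGraph n := by
  ext x y
  simp only [pathG, fromRel_adj, pathGraph_adj, ne_eq, Fin.ext_iff]
  omega

theorem starG_eq_starGraph (n : ℕ) : starG (n + 1) = starGraph 0 := by
  ext x y
  simp only [starG, fromRel_adj, starGraph_adj, ne_eq, Fin.ext_iff, Fin.val_zero]
  omega

/-- `S(d,i)`: the reciprocal distances from a pendant vertex at `v_i` to the spine `v_0 … v_d`. -/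
noncomputable def pendantSum (d i : ℕ) : ℝ :=
  ∑ a : Fin (d + 1), 1 / ((Nat.dist a i : ℝ) + 1)

theorem pendantSum_succ (d i : ℕ) :
    pendantSum (d + 1) i = pendantSum d i + 1 / ((Nat.dist (d + 1) i : ℝ) + 1) := by
  simp [pendantSum, Fin.sum_univ_castSucc]

theorem pendantSum_succ_succ (d i : ℕ) :
    pendantSum (d + 1) (i + 1) = pendantSum d i + 1 / ((i : ℝ) + 2) := by
  simp only [pendantSum, Fin.sum_univ_succ, Fin.val_zero, Fin.val_succ, Nat.dist_zero_left,
    Nat.dist_add_add_right]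
  push_cast
  ring

theorem pendantSum_succ_half_le (c : ℕ) :
    pendantSum (c + 1) ((c + 1) / 2) ≤ pendantSum c (c / 2) + 1 / 2 := by
  obtain ⟨s, rfl | rfl⟩ := Nat.even_or_odd' c
  · rw [show (2 * s + 1) / 2 = s by omega, show 2 * s / 2 = s by omega, pendantSum_succ,
      Nat.dist_eq_sub_of_le_right (by omega), show 2 * s + 1 - s = s + 1 by omega]
    have : (0 : ℝ) ≤ s := s.cast_nonneg
    have : (1 : ℝ) / ((s + 1 : ℕ) + 1) ≤ 1 / 2 :=
      one_div_le_one_div_of_le (by norm_num) (by push_cast; linarith)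
    linarith
  · rw [show (2 * s + 1 + 1) / 2 = s + 1 by omega, show (2 * s + 1) / 2 = s by omega,
      pendantSum_succ_succ]
    have : (0 : ℝ) ≤ s := s.cast_nonneg
    have : (1 : ℝ) / (s + 2) ≤ 1 / 2 := one_div_le_one_div_of_le (by norm_num) (by linarith)
    linarith

theorem pendantSum_self_lt {d i : ℕ} (hi : 0 < i) (hid : i < d) :
    pendantSum d d < pendantSum d i := by
  induction d, hid using Nat.le_induction with
  | base =>
    rw [pendantSum_succ_succ, pendantSum_succ, Nat.dist_eq_sub_of_le_right (by omega),
      Nat.add_sub_cancel_left]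
    have : (1 : ℝ) ≤ i := by exact_mod_cast hi
    have : (1 : ℝ) / (i + 2) < 1 / 2 := one_div_lt_one_div_of_lt (by norm_num) (by linarith)
    push_cast
    linarith
  | succ d hid ih =>
    rw [pendantSum_succ_succ, pendantSum_succ, Nat.dist_eq_sub_of_le_right (by omega)]
    have hfar : ((d + 1 - i : ℕ) : ℝ) + 1 ≤ d + 2 := by
      exact_mod_cast (by omega : d + 1 - i + 1 ≤ d + 2)
    have : (1 : ℝ) / (d + 2) ≤ 1 / ((d + 1 - i : ℕ) + 1) :=
      one_div_le_one_div_of_le (by positivity) hfar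
    linarith

theorem harary_pathGraph_succ (d : ℕ) :
    harary (pathGraph (d + 2)) = harary (pathGraph (d + 1)) + pendantSum d d := by
  simp only [harary_eq_sum, pathGraph_dist, Fin.sum_univ_castSucc (n := d + 1), Fin.val_castSucc,
    Fin.val_last, Finset.sum_add_distrib]
  have hlast : ∑ a : Fin (d + 1), 1 / (Nat.dist a (d + 1) : ℝ) = pendantSum d d := by
    refine Finset.sum_congr rfl fun a _ => ?_
    rw [Nat.dist_eq_sub_of_le (by omega), Nat.dist_eq_sub_of_le (by omega),
      show d + 1 - a = d - a + 1 by omega]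
    push_cast
    rfl
  simp only [Nat.dist_comm (d + 1), hlast, Nat.dist_self]
  push_cast
  ring

section Caterpillar

variable {n d i : ℕ}

@[simp]
theorem caterpillar_adj_inl_inl {a b : Fin (d + 1)} :
    (caterpillar n d i).Adj (.inl a) (.inl b) ↔ (pathGraph (d + 1)).Adj a b := by
  simp only [caterpillar, fromRel_adj, pathGraph_adj, ne_eq, Sum.inl.injEq, exists_and_left,
    exists_eq_left', reduceCtorEq, exists_false, and_false, or_false]
  grind

@[simp]
theorem caterpillar_adj_inl_inr {a : Fin (d + 1)} {p : Fin (n - d - 1)} :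
    (caterpillar n d i).Adj (.inl a) (.inr p) ↔ a.val = i := by
  simp [caterpillar]

@[simp]
theorem caterpillar_adj_inr_inl {a : Fin (d + 1)} {p : Fin (n - d - 1)} :
    (caterpillar n d i).Adj (.inr p) (.inl a) ↔ a.val = i := by
  rw [adj_comm, caterpillar_adj_inl_inr]

@[simp]
theorem caterpillar_not_adj_inr_inr {p q : Fin (n - d - 1)} :
    ¬ (caterpillar n d i).Adj (.inr p) (.inr q) := by
  simp [caterpillar]

theorem caterpillar_adj_attach (hi : i ≤ d) (p : Fin (n - d - 1)) :
    (caterpillar n d i).Adj (.inl ⟨i, Nat.lt_succ_of_le hi⟩) (.inr p) :=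
  caterpillar_adj_inl_inr.mpr rfl

def caterpillarSpine : pathGraph (d + 1) →g caterpillar n d i :=
  ⟨Sum.inl, caterpillar_adj_inl_inl.mpr⟩

theorem caterpillar_connected (hi : i ≤ d) : (caterpillar n d i).Connected := by
  refine (connected_iff_exists_forall_reachable _).mpr ⟨.inl ⟨i, Nat.lt_succ_of_le hi⟩, ?_⟩
  rintro (a | p)
  · exact (pathGraph_preconnected _ _ a).map caterpillarSpine
  · exact (caterpillar_adj_attach hi p).reachable

theorem caterpillar_dist_inl_inl (a b : Fin (d + 1)) :
    (caterpillar n d i).dist (.inl a) (.inl b) = Nat.dist a b := by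
  have hreach := pathGraph_preconnected _ a b
  refine le_antisymm ((caterpillarSpine.dist_le hreach).trans_eq (pathGraph_dist a b)) ?_
  refine (hreach.map caterpillarSpine).natDist_le_dist (f := Sum.elim Fin.val fun _ => i) ?_
  rintro (x | p) (y | q) h <;>
    simp only [caterpillar_adj_inl_inl, pathGraph_adj, caterpillar_adj_inl_inr,
      caterpillar_adj_inr_inl, caterpillar_not_adj_inr_inr] at h <;>
    simp only [Sum.elim_inl, Sum.elim_inr, Nat.dist] <;> omega

theorem caterpillar_dist_inl_inr (hi : i ≤ d) (a : Fin (d + 1)) (p : Fin (n - d - 1)) :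
    (caterpillar n d i).dist (.inl a) (.inr p) = Nat.dist a i + 1 := by
  have hadj := caterpillar_adj_attach hi p
  refine le_antisymm ?_ ?_
  · have := hadj.reachable.dist_triangle_right (.inl a)
    rwa [caterpillar_dist_inl_inl, dist_eq_one_iff_adj.mpr hadj] at this
  · refine (Nat.dist_zero_right _).symm.trans_le <|
      ((caterpillar_connected hi).preconnected (.inl a) (.inr p)).natDist_le_dist
      (f := Sum.elim (fun x : Fin (d + 1) => Nat.dist x i + 1) fun _ => 0) ?_
    rintro (x | q) (y | r) h <;>
      simp only [caterpillar_adj_inl_inl, pathGraph_adj, caterpillar_adj_inl_inr,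
        caterpillar_adj_inr_inl, caterpillar_not_adj_inr_inr] at h <;>
      simp only [Sum.elim_inl, Sum.elim_inr, Nat.dist] <;> omega

theorem caterpillar_dist_inr_inl (hi : i ≤ d) (a : Fin (d + 1)) (p : Fin (n - d - 1)) :
    (caterpillar n d i).dist (.inr p) (.inl a) = Nat.dist a i + 1 := by
  rw [dist_comm, caterpillar_dist_inl_inr hi]

theorem caterpillar_dist_inr_inr (hi : i ≤ d) {p q : Fin (n - d - 1)} (hpq : p ≠ q) :
    (caterpillar n d i).dist (.inr p) (.inr q) = 2 :=
  dist_eq_two_of_adj_of_adj (by simpa using hpq) caterpillar_not_adj_inr_inr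
    (caterpillar_adj_attach hi p).symm (caterpillar_adj_attach hi q)

theorem harary_caterpillar (hi : i ≤ d) :
    harary (caterpillar n d i) = harary (pathGraph (d + 1)) +
      (n - d - 1 : ℕ) * pendantSum d i + (n - d - 1 : ℕ) * ((n - d - 1 : ℕ) - 1) / 4 := by
  have hpendants : ∀ p : Fin (n - d - 1),
      ∑ q, 1 / ((caterpillar n d i).dist (.inr p) (.inr q) : ℝ) =
        ((n - d - 1 : ℕ) - 1) / 2 := by
    intro p
    rw [← Finset.add_sum_erase _ _ (Finset.mem_univ p), Finset.sum_congr rfl fun q hq => by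
      rw [caterpillar_dist_inr_inr hi (Finset.ne_of_mem_erase hq).symm]]
    simp only [dist_self, Nat.cast_zero, div_zero, zero_add, Finset.sum_const,
      Finset.card_erase_of_mem (Finset.mem_univ p), Finset.card_univ, Fintype.card_fin,
      nsmul_eq_mul, Nat.cast_sub p.pos]
    push_cast
    ring
  simp only [harary_eq_sum, Fintype.sum_sum_type, caterpillar_dist_inl_inl, pathGraph_dist,
    caterpillar_dist_inl_inr hi, caterpillar_dist_inr_inl hi, hpendants, Finset.sum_const,
    Finset.card_univ, Fintype.card_fin, nsmul_eq_mul, Finset.sum_add_distrib, ← Finset.mul_sum]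
  push_cast
  unfold pendantSum
  ring

end Caterpillar

theorem harary_caterpillar_succ_lt {n c : ℕ} (hc : 2 ≤ c) (hcn : c + 2 ≤ n) :
    harary (caterpillar n (c + 1) ((c + 1) / 2)) < harary (caterpillar n c (c / 2)) := by
  set m := n - (c + 1) - 1
  rw [harary_caterpillar (by omega), harary_caterpillar (by omega), show n - c - 1 = m + 1 by omega,
    harary_pathGraph_succ]
  have hend := mul_le_mul_of_nonneg_left (pendantSum_succ_half_le c) (Nat.cast_nonneg (α := ℝ) m)
  have hcenter := pendantSum_self_lt (d := c) (i := c / 2) (by omega) (by omega)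
  push_cast
  linarith

theorem harary_pathG_eq_caterpillar {n : ℕ} (hn : 1 ≤ n) :
    harary (pathG n) = harary (caterpillar n (n - 1) ((n - 1) / 2)) := by
  obtain ⟨e, rfl⟩ : ∃ e, n = e + 1 := ⟨n - 1, by omega⟩
  rw [pathG_eq_pathGraph, harary_caterpillar (Nat.div_le_self _ _)]
  simp

theorem harary_caterpillar_two_one {n : ℕ} (hn : 3 ≤ n) :
    harary (caterpillar n 2 1) = harary (starG n) := by
  obtain ⟨e, rfl⟩ : ∃ e, n = e + 1 := ⟨n - 1, by omega⟩
  have hP3 : harary (pathGraph 3) = 5 / 2 := by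
    norm_num [harary_eq_sum, pathGraph_dist, Fin.sum_univ_succ, Nat.dist]
  have hS : pendantSum 2 1 = 2 := by
    norm_num [pendantSum, Fin.sum_univ_succ, Nat.dist]
  rw [starG_eq_starGraph, harary_starGraph, harary_caterpillar (by norm_num), hP3, hS,
    Fintype.card_fin, show e + 1 - 2 - 1 = e - 2 by omega, Nat.cast_sub (by omega)]
  push_cast
  ring

theorem harary_caterpillar_chain (n d : ℕ) (hn : 5 ≤ n) (hd3 : 3 ≤ d) (hdn : d ≤ n - 1) :
    harary (caterpillar n d (d / 2)) < harary (caterpillar n (d - 1) ((d - 1) / 2)) ∧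
    harary (pathG n) = harary (caterpillar n (n - 1) ((n - 1) / 2)) ∧
    harary (caterpillar n 2 1) = harary (starG n) := by
  obtain ⟨c, rfl⟩ : ∃ c, d = c + 1 := ⟨d - 1, by omega⟩
  exact ⟨harary_caterpillar_succ_lt (by omega) (by omega), harary_pathG_eq_caterpillar (by omega),
    harary_caterpillar_two_one (by omega)⟩
end

section
/- For every n ≥ 4 and every Δ with 3 ≤ Δ ≤ n−1, H(B_{n,Δ−1}) < H(B_{n,Δ}). Consequently H(P_n) = H(B_{n,2}) < H(B_{n,3}) < … < H(B_{n,n−1}) = H(S_n). -/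
open Finset SimpleGraph

/-!
In the spider `spider L` two vertices are at distance `|j - j'|` on a common leg and `j + j' + 2`
on different legs (depths counted from `0` at the neighbour of the center), so its Harary index
is the sum of the Harary indices of the paths formed by the center with each leg, plus a cross
term `legCrossSum` for each pair of legs. For the broom this gives
`H(B_{n,k}) = H(P_{n-k+1}) + (k - 1) H_{n-k+1} + (k - 1)(k - 2)/4`, `H_m` the harmonic number.
Passing from `k = Δ - 1` to `k = Δ` the harmonic terms cancel and
`H(B_{n,Δ}) - H(B_{n,Δ-1}) = (Δ - 2)(1/2 - 1/(n - Δ + 2)) > 0`; at `k = 2` and `k = n - 1` the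
formula agrees with `H(P_n)` and `H(S_n) = (n - 1) + (n - 1)(n - 2)/4`.
-/

-- The `if` in `harary` is redundant: `dist v v = 0` and `0⁻¹ = 0` in `ℝ`.
theorem harary_eq_sum_inv_dist {V : Type*} [Fintype V] (G : SimpleGraph V) :
    harary G = (∑ u, ∑ v, ((G.dist u v : ℕ) : ℝ)⁻¹) / 2 := by
  unfold harary
  congr 1
  refine Fintype.sum_congr _ _ fun u => Fintype.sum_congr _ _ fun v => ?_
  split_ifs with h
  · simp [h]
  · rw [one_div]

namespace SimpleGraph

variable {V : Type*} {G : SimpleGraph V}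

theorem le_length_of_adj_le {f : V → V → ℕ} (hself : ∀ v, f v v = 0)
    (hadj : ∀ u u' v, G.Adj u u' → f u v ≤ f u' v + 1) {u v : V} (p : G.Walk u v) :
    f u v ≤ p.length := by
  induction p with
  | nil => simp [hself]
  | cons h p ih => exact (hadj _ _ _ h).trans (by simpa using ih)

theorem exists_walk_length_le_of_exists_adj_lt {f : V → V → ℕ}
    (hdesc : ∀ u v, u ≠ v → ∃ u', G.Adj u u' ∧ f u' v < f u v) (u v : V) :
    ∃ p : G.Walk u v, p.length ≤ f u v := by
  induction h : f u v using Nat.strong_induction_on generalizing u with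
  | _ n ih =>
    by_cases huv : u = v
    · subst huv
      exact ⟨Walk.nil, by simp⟩
    obtain ⟨u', hu', hlt⟩ := hdesc u v huv
    obtain ⟨p, hp⟩ := ih _ (h ▸ hlt) u' rfl
    exact ⟨Walk.cons hu' p, by simp; omega⟩

theorem dist_eq_of_adj_le_of_exists_adj_lt {f : V → V → ℕ} (hself : ∀ v, f v v = 0)
    (hadj : ∀ u u' v, G.Adj u u' → f u v ≤ f u' v + 1)
    (hdesc : ∀ u v, u ≠ v → ∃ u', G.Adj u u' ∧ f u' v < f u v) (u v : V) :
    G.dist u v = f u v := by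
  obtain ⟨p, hp⟩ := exists_walk_length_le_of_exists_adj_lt hdesc u v
  obtain ⟨q, hq⟩ := p.reachable.exists_walk_length_eq_dist
  have := le_length_of_adj_le hself hadj q
  have := dist_le p
  omega

end SimpleGraph

theorem pathG_adj {n : ℕ} {x y : Fin n} :
    (pathG n).Adj x y ↔ (y : ℕ) = x + 1 ∨ (x : ℕ) = y + 1 := by
  simp only [pathG, fromRel_adj, ne_eq]
  constructor
  · exact fun h => h.2
  · rintro h
    refine ⟨fun hxy => ?_, h⟩
    subst hxy
    omega

theorem pathG_dist {n : ℕ} (u v : Fin n) : (pathG n).dist u v = Nat.dist u v := by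
  refine dist_eq_of_adj_le_of_exists_adj_lt (f := fun x y : Fin n => Nat.dist x y)
    (by simp) ?_ ?_ u v
  · intro a b c h
    rw [pathG_adj] at h
    simp only [Nat.dist]
    omega
  · intro a b hab
    have hab' : (a : ℕ) ≠ b := Fin.val_ne_of_ne hab
    rcases lt_or_gt_of_ne hab' with h | h
    · refine ⟨⟨a + 1, by omega⟩, pathG_adj.2 (Or.inl rfl), ?_⟩
      simp only [Nat.dist]
      omega
    · refine ⟨⟨a - 1, by omega⟩, pathG_adj.2 (Or.inr (by simp; omega)), ?_⟩
      simp only [Nat.dist]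
      omega

theorem harary_pathG (n : ℕ) :
    harary (pathG n) = (∑ x ∈ range n, ∑ y ∈ range n, ((Nat.dist x y : ℕ) : ℝ)⁻¹) / 2 := by
  simp only [harary_eq_sum_inv_dist, pathG_dist, Finset.sum_range]

theorem sum_range_inv_dist (n : ℕ) :
    ∑ x ∈ range n, ((Nat.dist x n : ℕ) : ℝ)⁻¹ = harmonic n := by
  rw [← sum_range_reflect, harmonic]
  push_cast
  refine sum_congr rfl fun x hx => ?_
  rw [mem_range] at hx
  rw [show Nat.dist (n - 1 - x) n = x + 1 by simp only [Nat.dist]; omega]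
  push_cast
  ring

theorem harary_pathG_succ (n : ℕ) :
    harary (pathG (n + 1)) = harary (pathG n) + harmonic n := by
  have hcol : ∑ x ∈ range n, ((Nat.dist x n : ℕ) : ℝ)⁻¹ = harmonic n := sum_range_inv_dist n
  have hrow : ∑ y ∈ range n, ((Nat.dist n y : ℕ) : ℝ)⁻¹ = harmonic n := by
    simpa only [Nat.dist_comm] using hcol
  simp only [harary_pathG, sum_range_succ, sum_add_distrib, hcol, hrow, Nat.dist_self]
  ring

theorem Fintype.sum_ite_eq_zero_const {ι R : Type*} [Fintype ι] [DecidableEq ι] [CommRing R]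
    (i : ι) (c : R) :
    ∑ j, (if i = j then 0 else c) = (Fintype.card ι - 1) * c := by
  have h : ∀ j, (if i = j then 0 else c) = c - if i = j then c else 0 := fun j => by
    split_ifs <;> ring
  simp only [h, sum_sub_distrib, sum_const, sum_ite_eq, card_univ, nsmul_eq_mul]
  ring

theorem starG_adj {n : ℕ} {x y : Fin n} :
    (starG n).Adj x y ↔ ((x : ℕ) = 0 ∧ (y : ℕ) ≠ 0) ∨ ((y : ℕ) = 0 ∧ (x : ℕ) ≠ 0) := by
  simp only [starG, fromRel_adj, ne_eq]
  constructor
  · exact fun h => h.2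
  · rintro h
    refine ⟨fun hxy => ?_, h⟩
    subst hxy
    omega

theorem starG_dist {n : ℕ} (u v : Fin n) :
    (starG n).dist u v = if u = v then 0 else if (u : ℕ) = 0 ∨ (v : ℕ) = 0 then 1 else 2 := by
  refine dist_eq_of_adj_le_of_exists_adj_lt
    (f := fun x y : Fin n => if x = y then 0 else if (x : ℕ) = 0 ∨ (y : ℕ) = 0 then 1 else 2)
    (by simp) ?_ ?_ u v
  · intro a b c h
    rw [starG_adj] at h
    simp only [Fin.ext_iff]
    split_ifs <;> omega
  · intro a b hab
    simp only [hab, if_false]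
    by_cases h0 : (a : ℕ) = 0 ∨ (b : ℕ) = 0
    · refine ⟨b, starG_adj.2 ?_, by simp [h0]⟩
      have := Fin.val_ne_of_ne hab
      omega
    · push Not at h0
      refine ⟨⟨0, by omega⟩, starG_adj.2 (Or.inr ⟨rfl, h0.1⟩), ?_⟩
      simp [Fin.ext_iff, h0.1, h0.2, Ne.symm h0.2]

theorem harary_starG (t : ℕ) : harary (starG (t + 1)) = t + t * (t - 1) / 4 := by
  rw [harary_eq_sum_inv_dist]
  simp only [starG_dist, Fin.sum_univ_succ]
  simp only [Fin.val_zero, Fin.val_succ, Fin.succ_ne_zero, (Fin.succ_ne_zero _).symm,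
    Fin.succ_inj, Nat.add_eq_zero_iff, one_ne_zero, and_false, or_false, or_true, ↓reduceIte,
    Nat.cast_zero, Nat.cast_one, Nat.cast_ite, Nat.cast_ofNat, inv_zero, inv_one,
    apply_ite (fun x : ℝ => x⁻¹), Fintype.sum_ite_eq_zero_const, sum_const, card_univ,
    Fintype.card_fin, nsmul_eq_mul, mul_one, zero_add]
  ring

section Spider

variable {k : ℕ} {L : Fin k → ℕ}

def spiderDist (L : Fin k → ℕ) : Option (Σ i, Fin (L i)) → Option (Σ i, Fin (L i)) → ℕ
  | none, none => 0
  | none, some a => a.2 + 1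
  | some a, none => a.2 + 1
  | some a, some b => if a.1 = b.1 then Nat.dist a.2 b.2 else a.2 + b.2 + 2

theorem spider_adj_none_some (i : Fin k) (j : Fin (L i)) (hj : (j : ℕ) = 0) :
    (spider L).Adj none (some ⟨i, j⟩) := by
  rw [spider, fromRel_adj]
  exact ⟨by simp, Or.inl (Or.inl ⟨i, j, rfl, rfl, hj⟩)⟩

theorem spider_adj_some_some (i : Fin k) (j j' : Fin (L i)) (h : (j' : ℕ) = j + 1) :
    (spider L).Adj (some ⟨i, j⟩) (some ⟨i, j'⟩) := by
  rw [spider, fromRel_adj]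
  refine ⟨fun hjj => ?_, Or.inl (Or.inr ⟨i, j, j', rfl, rfl, h⟩)⟩
  simp only [Option.some.injEq, Sigma.mk.injEq, heq_eq_eq, true_and] at hjj
  omega

theorem spider_exists_adj_toward_center (i : Fin k) (j : Fin (L i)) :
    ∃ w, (spider L).Adj (some ⟨i, j⟩) w ∧ ∀ v, (∀ j' : Fin (L i), v = some ⟨i, j'⟩ → j' < j) →
      spiderDist L w v < spiderDist L (some ⟨i, j⟩) v := by
  obtain hj | hj := Nat.eq_zero_or_pos j
  · refine ⟨none, (spider_adj_none_some i j hj).symm, fun v hv => ?_⟩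
    rcases v with _ | ⟨i', j'⟩
    · simp [spiderDist]
    by_cases hi : i = i'
    · subst hi
      exact absurd (hv j' rfl) (by omega)
    simp [spiderDist, hi]
  · refine ⟨some ⟨i, ⟨j - 1, by omega⟩⟩, spider_adj_some_some _ _ _ (by simp; omega) |>.symm,
      fun v hv => ?_⟩
    rcases v with _ | ⟨i', j'⟩
    · simp only [spiderDist]
      omega
    by_cases hi : i = i'
    · subst hi
      have := hv j' rfl
      simp only [spiderDist, if_true, Nat.dist]
      omega
    simp only [spiderDist, hi, if_false]
    omega

theorem spider_dist (u v : Option (Σ i, Fin (L i))) : (spider L).dist u v = spiderDist L u v := by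
  refine dist_eq_of_adj_le_of_exists_adj_lt (fun u => ?_) (fun a b c hadj => ?_)
    (fun u v huv => ?_) u v
  · rcases u with _ | ⟨i, j⟩ <;> simp [spiderDist]
  · rw [spider, fromRel_adj] at hadj
    rcases hadj.2 with h | h <;>
      rcases h with ⟨i, j, rfl, rfl, h⟩ | ⟨i, j, j', rfl, rfl, h⟩ <;>
      rcases c with _ | ⟨i', j''⟩ <;>
      simp only [spiderDist, Nat.dist] <;> (try split_ifs) <;> omega
  rcases u with _ | ⟨i, j⟩
  · obtain _ | ⟨i', j'⟩ := v
    · exact absurd rfl huv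
    exact ⟨some ⟨i', ⟨0, j'.pos⟩⟩, spider_adj_none_some _ _ rfl, by simp [spiderDist, Nat.dist]⟩
  by_cases hup : ∃ j' : Fin (L i), v = some ⟨i, j'⟩ ∧ j < j'
  · obtain ⟨j', rfl, hlt⟩ := hup
    refine ⟨some ⟨i, ⟨j + 1, by omega⟩⟩, spider_adj_some_some _ _ _ rfl, ?_⟩
    simp only [spiderDist, if_true, Nat.dist]
    omega
  obtain ⟨w, hw, hwv⟩ := spider_exists_adj_toward_center i j
  refine ⟨w, hw, hwv v fun j' hv => ?_⟩
  subst hv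
  have hne : j' ≠ j := by rintro rfl; exact huv rfl
  exact (Fin.lt_or_lt_of_ne hne).resolve_right fun hlt => hup ⟨j', rfl, hlt⟩

/-- The contribution to the Harary index of a spider of the pairs of vertices lying on two
different legs, of lengths `a` and `b`. -/
noncomputable def legCrossSum (a b : ℕ) : ℝ :=
  ∑ x ∈ range a, ∑ y ∈ range b, ((x + y + 2 : ℕ) : ℝ)⁻¹

theorem sum_inv_spiderDist_none_some :
    ∑ a : Σ i, Fin (L i), ((spiderDist L none (some a) : ℕ) : ℝ)⁻¹ = ∑ i, (harmonic (L i) : ℝ) := by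
  rw [Fintype.sum_sigma]
  refine Fintype.sum_congr _ _ fun i => ?_
  simp [spiderDist, harmonic, Finset.sum_range]

theorem sum_inv_spiderDist_some_some :
    ∑ a : Σ i, Fin (L i), ∑ b : Σ i, Fin (L i), ((spiderDist L (some a) (some b) : ℕ) : ℝ)⁻¹ =
      ∑ i, 2 * harary (pathG (L i)) +
        ∑ i, ∑ i', if i = i' then 0 else legCrossSum (L i) (L i') := by
  have hblock : ∀ i i', ∑ j : Fin (L i), ∑ j' : Fin (L i'),
      ((spiderDist L (some ⟨i, j⟩) (some ⟨i', j'⟩) : ℕ) : ℝ)⁻¹ =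
        (if i = i' then 2 * harary (pathG (L i)) else 0) +
          if i = i' then 0 else legCrossSum (L i) (L i') := by
    intro i i'
    by_cases hi : i = i'
    · subst hi
      simp [spiderDist, harary_eq_sum_inv_dist, pathG_dist, mul_div_cancel₀]
    · simp [spiderDist, hi, legCrossSum, Finset.sum_range]
  simp only [Fintype.sum_sigma]
  rw [← sum_add_distrib]
  refine Fintype.sum_congr _ _ fun i => ?_
  rw [sum_comm]
  simp only [hblock, sum_add_distrib, sum_ite_eq, mem_univ, if_true]

theorem harary_spider :
    harary (spider L) = ∑ i, harary (pathG (L i + 1)) +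
      (∑ i, ∑ i', if i = i' then 0 else legCrossSum (L i) (L i')) / 2 := by
  have hsymm : ∀ a, spiderDist L (some a) none = spiderDist L none (some a) := fun _ => rfl
  rw [harary_eq_sum_inv_dist]
  simp only [spider_dist, Fintype.sum_option, sum_add_distrib, hsymm, sum_inv_spiderDist_none_some,
    sum_inv_spiderDist_some_some, harary_pathG_succ, ← mul_sum]
  simp only [spiderDist, Nat.cast_zero, inv_zero]
  ring

end Spider

theorem legCrossSum_comm (a b : ℕ) : legCrossSum a b = legCrossSum b a := by
  unfold legCrossSum
  rw [sum_comm]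
  exact sum_congr rfl fun y _ => sum_congr rfl fun x _ => by rw [Nat.add_comm y x]

theorem legCrossSum_one_right (m : ℕ) : legCrossSum m 1 = harmonic (m + 1) - 1 := by
  rw [legCrossSum, harmonic, sum_range_succ']
  push_cast
  simp only [sum_range_one]
  ring_nf

theorem harary_pathG_two : harary (pathG 2) = 1 := by
  simp [harary_pathG_succ, harary_pathG]

theorem harary_broom (n k : ℕ) (hk : 1 ≤ k) :
    harary (broom n k) =
      harary (pathG (n - k + 1)) + (k - 1) * harmonic (n - k + 1) + (k - 1) * (k - 2) / 4 := by
  obtain ⟨k, rfl⟩ : ∃ k', k = k' + 1 := ⟨k - 1, by omega⟩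
  have hleg0 : broomLegs n (k + 1) 0 = n - (k + 1) := by simp [broomLegs]
  have hlegs : ∀ i : Fin k, broomLegs n (k + 1) i.succ = 1 := by simp [broomLegs]
  have hpaths : ∑ i, harary (pathG (broomLegs n (k + 1) i + 1)) =
      harary (pathG (n - (k + 1) + 1)) + k := by
    have hshort : ∀ i : Fin k, harary (pathG (broomLegs n (k + 1) i.succ + 1)) = 1 := fun i => by
      rw [hlegs i, harary_pathG_two]
    rw [Fin.sum_univ_succ, hleg0]
    simp [hshort]
  have hcross : (∑ i, ∑ i', if i = i' then 0 else
        legCrossSum (broomLegs n (k + 1) i) (broomLegs n (k + 1) i')) =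
      2 * k * legCrossSum (n - (k + 1)) 1 + k * (k - 1) * legCrossSum 1 1 := by
    simp only [Fin.sum_univ_succ, hleg0, hlegs, ↓reduceIte, (Fin.succ_ne_zero _).symm,
      Fin.succ_ne_zero, Fin.succ_inj, legCrossSum_comm 1, Fintype.sum_ite_eq_zero_const, sum_const,
      card_univ, Fintype.card_fin, nsmul_eq_mul, zero_add, smul_add]
    ring
  rw [broom, harary_spider, hpaths, hcross, legCrossSum_one_right, legCrossSum_one_right,
    harmonic_succ 1, harmonic_succ 0, harmonic_zero]
  push_cast
  ring

theorem harary_broom_chain_general (n Δ : ℕ) (hΔ3 : 3 ≤ Δ) (hΔn : Δ ≤ n - 1) :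
    harary (broom n (Δ - 1)) < harary (broom n Δ) ∧
    harary (pathG n) = harary (broom n 2) ∧
    harary (broom n (n - 1)) = harary (starG n) := by
  obtain ⟨t, rfl⟩ : ∃ t, n = t + 1 := ⟨n - 1, by omega⟩
  refine ⟨?_, ?_, ?_⟩
  · obtain ⟨m, hm⟩ : ∃ m, t + 1 - Δ + 1 = m + 2 := ⟨t - Δ, by omega⟩
    rw [harary_broom _ _ (by omega), harary_broom _ _ (by omega), hm,
      show t + 1 - (Δ - 1) + 1 = m + 2 + 1 by omega, harary_pathG_succ, harmonic_succ (m + 2),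
      Nat.cast_sub (by omega : 1 ≤ Δ)]
    have hΔ : (3 : ℝ) ≤ Δ := by exact_mod_cast hΔ3
    have hinv : ((m + 2 + 1 : ℕ) : ℝ)⁻¹ ≤ 1 / 3 := by
      rw [one_div]
      gcongr
      norm_cast
      omega
    push_cast at hinv ⊢
    nlinarith
  · rw [harary_broom _ 2 (by norm_num), show t + 1 - 2 + 1 = t by omega]
    obtain ⟨s, rfl⟩ : ∃ s, t = s + 1 := ⟨t - 1, by omega⟩
    rw [harary_pathG_succ]
    norm_num
  · rw [harary_broom _ _ (by omega), show t + 1 - (t + 1 - 1) + 1 = 2 by omega, harary_pathG_two,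
      harary_starG, Nat.add_sub_cancel, harmonic_succ 1, harmonic_succ 0, harmonic_zero]
    push_cast
    ring

theorem harary_broom_chain (n Δ : ℕ) (hn : 4 ≤ n) (hΔ3 : 3 ≤ Δ) (hΔn : Δ ≤ n - 1) :
    harary (broom n (Δ - 1)) < harary (broom n Δ) ∧
    harary (pathG n) = harary (broom n 2) ∧
    harary (broom n (n - 1)) = harary (starG n) :=
  harary_broom_chain_general n Δ hΔ3 hΔn
end
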